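/- arXiv:2406.10347 — 4 statements merged into one kernel-verified Lean document; each statement's English description precedes it below -/
import Mathlib

section
/- For every real number z with -1 < z ≤ 0, we have ln(1+z) ≤ 2z/(2+z). -/
/-! The function `x ↦ 2x/(2+x) - log(1+x)` vanishes at `0` and has derivative
`-x²/((2+x)²(1+x)) ≤ 0` on `(-1, ∞)`, so it is nonnegative to the left of `0`. -/

open Real Set

lemma hasDerivAt_two_mul_div_two_add_sub_log_one_add {x : ℝ} (hx : -1 < x) :
    HasDerivAt (fun x => 2 * x / (2 + x) - log (1 + x))
      (-x ^ 2 / ((2 + x) ^ 2 * (1 + x))) x := by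
  have h1 : 1 + x ≠ 0 := by linarith
  have h2 : 2 + x ≠ 0 := by linarith
  have hquot := ((hasDerivAt_id' x).const_mul 2).fun_div ((hasDerivAt_id' x).const_add 2) h2
  have hlog := ((hasDerivAt_id' x).const_add 1).log h1
  refine (hquot.fun_sub hlog).congr_deriv ?_
  field_simp
  ring

lemma antitoneOn_two_mul_div_two_add_sub_log_one_add :
    AntitoneOn (fun x => 2 * x / (2 + x) - log (1 + x)) (Ioi (-1)) := by
  refine antitoneOn_of_hasDerivWithinAt_nonpos (convex_Ioi _)
    (fun x hx =>
      (hasDerivAt_two_mul_div_two_add_sub_log_one_add hx).continuousAt.continuousWithinAt)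
    (fun x hx => (hasDerivAt_two_mul_div_two_add_sub_log_one_add
      (interior_subset hx)).hasDerivWithinAt) fun x hx => ?_
  rw [interior_Ioi, mem_Ioi] at hx
  have hx1 : 0 < 1 + x := by linarith
  exact div_nonpos_of_nonpos_of_nonneg (neg_nonpos.mpr (sq_nonneg x)) (by positivity)

theorem log_one_add_le_of_nonpos (z : ℝ) (hz1 : -1 < z) (hz2 : z ≤ 0) :
    Real.log (1 + z) ≤ 2 * z / (2 + z) := by
  have h := antitoneOn_two_mul_div_two_add_sub_log_one_add hz1
    (show (0 : ℝ) ∈ Ioi (-1) by norm_num) hz2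
  simp only [mul_zero, add_zero, zero_div, log_one, sub_zero] at h
  linarith
end

section
/- The function μ(c) = exp(3√c) · (1 + 3√c/(c + 3√c))^(−c − 6√c), defined for real c ≥ 1, is monotonically decreasing in c. -/
/-!
With `x = √c` the function is `exp (muExponent x)`, where
`muExponent x = 3x - (x² + 6x) log ((x + 6)/(x + 3))`. Its derivative is
`3 + 3x/(x + 3) - (2x + 6) log ((x + 6)/(x + 3))`, and the bound `log (1 + t) ≥ 2t/(t + 2)`
at `t = 3/(x + 3)`, i.e. `log ((x + 6)/(x + 3)) ≥ 6/(2x + 9)`, makes it at most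
`-27/((x + 3)(2x + 9)) < 0`.
-/

open Real Set

noncomputable def muExponent (x : ℝ) : ℝ :=
  3 * x - (x ^ 2 + 6 * x) * log ((x + 6) / (x + 3))

theorem six_div_le_log_div {x : ℝ} (hx : -3 < x) :
    6 / (2 * x + 9) ≤ log ((x + 6) / (x + 3)) := by
  have h3 : 0 < x + 3 := by linarith
  have h9 : 2 * x + 9 ≠ 0 := by linarith
  have h := le_log_one_add_of_nonneg (by positivity : 0 ≤ 3 / (x + 3))
  rwa [show 2 * (3 / (x + 3)) / (3 / (x + 3) + 2) = 6 / (2 * x + 9) by field_simp; ring,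
    show 1 + 3 / (x + 3) = (x + 6) / (x + 3) by field_simp; ring] at h

theorem hasDerivAt_muExponent {x : ℝ} (hx : -3 < x) :
    HasDerivAt muExponent (3 + 3 * x / (x + 3) - (2 * x + 6) * log ((x + 6) / (x + 3))) x := by
  have h3 : x + 3 ≠ 0 := by linarith
  have h6 : x + 6 ≠ 0 := by linarith
  have hquot : HasDerivAt (fun y => (y + 6) / (y + 3)) (-3 / (x + 3) ^ 2) x :=
    (((hasDerivAt_id' x).add_const 6).div ((hasDerivAt_id' x).add_const 3) h3).congr_deriv
      (by ring)
  have hpoly : HasDerivAt (fun y : ℝ => y ^ 2 + 6 * y) (2 * x + 6) x :=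
    ((hasDerivAt_pow 2 x).add ((hasDerivAt_id' x).const_mul 6)).congr_deriv (by ring)
  exact (((hasDerivAt_id' x).const_mul 3).sub
    (hpoly.mul (hquot.log (div_ne_zero h6 h3)))).congr_deriv (by field_simp; ring)

theorem muExponent_antitoneOn : AntitoneOn muExponent (Ioi (-3)) := by
  refine antitoneOn_of_hasDerivWithinAt_nonpos (convex_Ioi _)
    (fun x hx => (hasDerivAt_muExponent hx).continuousAt.continuousWithinAt)
    (fun x hx => (hasDerivAt_muExponent (interior_subset hx)).hasDerivWithinAt) ?_
  rw [interior_Ioi]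
  intro x (hx : -3 < x)
  have h3 : 0 < x + 3 := by linarith
  have h9 : 0 < 2 * x + 9 := by linarith
  have hlog := mul_le_mul_of_nonneg_left (six_div_le_log_div hx) (by linarith : 0 ≤ 2 * x + 6)
  have hgap : (2 * x + 6) * (6 / (2 * x + 9)) - (3 + 3 * x / (x + 3)) =
      27 / ((x + 3) * (2 * x + 9)) := by
    field_simp
    ring
  have : 0 < 27 / ((x + 3) * (2 * x + 9)) := by positivity
  linarith

theorem exp_mul_rpow_eq_exp_muExponent {c : ℝ} (hc : 0 < c) :
    exp (3 * √c) * (1 + 3 * √c / (c + 3 * √c)) ^ (-c - 6 * √c) = exp (muExponent √c) := by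
  obtain ⟨s, hs, rfl⟩ : ∃ s, 0 < s ∧ c = s ^ 2 := ⟨√c, sqrt_pos.mpr hc, (sq_sqrt hc.le).symm⟩
  have hbase : 1 + 3 * s / (s ^ 2 + 3 * s) = (s + 6) / (s + 3) := by
    field_simp
    ring
  rw [sqrt_sq hs.le, hbase, rpow_def_of_pos (by positivity), ← exp_add, muExponent]
  ring_nf

theorem mu_antitoneOn :
    AntitoneOn (fun c : ℝ =>
      Real.exp (3 * Real.sqrt c) *
        (1 + 3 * Real.sqrt c / (c + 3 * Real.sqrt c)) ^ (-c - 6 * Real.sqrt c))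
      (Set.Ici (1 : ℝ)) := by
  intro a (ha : 1 ≤ a) b (hb : 1 ≤ b) hab
  simp only
  rw [exp_mul_rpow_eq_exp_muExponent (by linarith), exp_mul_rpow_eq_exp_muExponent (by linarith)]
  exact exp_le_exp.mpr <| muExponent_antitoneOn
    (show -3 < √a by linarith [sqrt_nonneg a]) (show -3 < √b by linarith [sqrt_nonneg b])
    (sqrt_le_sqrt hab)
end

section
/- The function ρ(c) = exp(−3√c) · (1 + (−3√c)/(c + 3√c))^(−c), defined for real c ≥ 1, is monotonically decreasing in c. -/
open Real

/-- key inequality: for x ≥ 1 (actually x > 0), log((x+3)/x) ≤ (6x+9)/(2x(x+3)). -/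
lemma key_log_ineq (x : ℝ) (hx : 0 < x) :
    Real.log (x + 3) - Real.log x ≤ (6 * x + 9) / (2 * x * (x + 3)) := by
  have hx3 : (0:ℝ) < x + 3 := by linarith
  set s : ℝ := (x + 3) / x with hs
  have hs1 : 1 ≤ s := by
    rw [hs, le_div_iff₀ hx]; linarith
  have hspos : 0 < s := lt_of_lt_of_le one_pos hs1
  have hlog : 0 ≤ Real.log s := Real.log_nonneg hs1
  have h1 : Real.log s ≤ Real.sinh (Real.log s) := Real.self_le_sinh_iff.mpr hlog
  have h2 : Real.sinh (Real.log s) = (s - s⁻¹) / 2 := by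
    rw [Real.sinh_eq, Real.exp_log hspos, Real.exp_neg, Real.exp_log hspos]
  have h3 : (s - s⁻¹) / 2 = (6 * x + 9) / (2 * x * (x + 3)) := by
    rw [hs]
    field_simp
    ring
  have := h1.trans_eq (h2.trans h3)
  rwa [hs, Real.log_div (by positivity) (ne_of_gt hx)] at this

noncomputable def gfun (x : ℝ) : ℝ := -(3 * x) + x ^ 2 * (Real.log (x + 3) - Real.log x)

lemma gfun_hasDeriv (x : ℝ) (hx : 0 < x) :
    HasDerivAt gfun (-3 + (2 * x * (Real.log (x + 3) - Real.log x)
      + x ^ 2 * (1 / (x + 3) - 1 / x))) x := by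
  have hx3 : (0:ℝ) < x + 3 := by linarith
  have h1 : HasDerivAt (fun y : ℝ => Real.log (y + 3)) (1 / (x + 3)) x := by
    have := (Real.hasDerivAt_log (ne_of_gt hx3)).comp x
      ((hasDerivAt_id x).add_const 3)
    exact this.congr_deriv (by ring)
  have h2 : HasDerivAt Real.log (1 / x) x := by
    simpa [one_div] using Real.hasDerivAt_log (ne_of_gt hx)
  have h3 : HasDerivAt (fun y : ℝ => y ^ 2) (2 * x) x := by
    simpa using hasDerivAt_pow 2 x
  have h4 := h3.mul (h1.sub h2)
  have h5 : HasDerivAt (fun y : ℝ => -(3 * y)) (-3) x := by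
    exact ((hasDerivAt_id x).const_mul (3:ℝ)).neg.congr_deriv (by ring)
  have := h5.add h4
  convert this using 1 <;> rfl

lemma gfun_deriv_nonpos (x : ℝ) (hx : 1 ≤ x) : deriv gfun x ≤ 0 := by
  have hx0 : (0:ℝ) < x := lt_of_lt_of_le one_pos hx
  have hx3 : (0:ℝ) < x + 3 := by linarith
  rw [(gfun_hasDeriv x hx0).deriv]
  have hk := key_log_ineq x hx0
  have h1 : 2 * x * (Real.log (x + 3) - Real.log x) ≤ (6 * x + 9) / (x + 3) := by
    have := mul_le_mul_of_nonneg_left hk (by positivity : (0:ℝ) ≤ 2 * x)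
    calc 2 * x * (Real.log (x + 3) - Real.log x)
        ≤ 2 * x * ((6 * x + 9) / (2 * x * (x + 3))) := this
      _ = (6 * x + 9) / (x + 3) := by field_simp
  have h2 : x ^ 2 * (1 / (x + 3) - 1 / x) = -(3 * x) / (x + 3) := by
    field_simp; ring
  rw [h2]
  have h3 : (6 * x + 9) / (x + 3) + -(3 * x) / (x + 3) = 3 := by
    field_simp; ring
  linarith

lemma gfun_antitone : AntitoneOn gfun (Set.Ici (1:ℝ)) := by
  have hcont : ContinuousOn gfun (Set.Ici (1:ℝ)) := by
    intro x hx
    have hx0 : (0:ℝ) < x := lt_of_lt_of_le one_pos hx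
    exact ((gfun_hasDeriv x hx0).continuousAt).continuousWithinAt
  apply antitoneOn_of_deriv_nonpos (convex_Ici 1) hcont
  · intro x hx
    rw [interior_Ici] at hx
    exact ((gfun_hasDeriv x (lt_of_lt_of_le one_pos (le_of_lt hx))).differentiableAt).differentiableWithinAt
  · intro x hx
    rw [interior_Ici] at hx
    exact gfun_deriv_nonpos x (le_of_lt hx)

theorem rho_antitoneOn :
    AntitoneOn (fun c : ℝ =>
      Real.exp (-(3 * Real.sqrt c)) *
        (1 + (-(3 * Real.sqrt c)) / (c + 3 * Real.sqrt c)) ^ (-c))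
      (Set.Ici (1 : ℝ)) := by
  -- first: on Ici 1, the function equals exp (gfun (sqrt c))
  have hrw : ∀ c : ℝ, 1 ≤ c →
      Real.exp (-(3 * Real.sqrt c)) *
        (1 + (-(3 * Real.sqrt c)) / (c + 3 * Real.sqrt c)) ^ (-c)
      = Real.exp (gfun (Real.sqrt c)) := by
    intro c hc
    have hc0 : (0:ℝ) < c := lt_of_lt_of_le one_pos hc
    have hs0 : 0 < Real.sqrt c := Real.sqrt_pos.mpr hc0
    have hsq : Real.sqrt c ^ 2 = c := Real.sq_sqrt hc0.le
    set x := Real.sqrt c with hxdef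
    have hden : 0 < c + 3 * x := by positivity
    have hbase : 1 + (-(3 * x)) / (c + 3 * x) = c / (c + 3 * x) := by
      field_simp
      ring
    have hbpos : 0 < c / (c + 3 * x) := by positivity
    rw [hbase, Real.rpow_def_of_pos hbpos, ← Real.exp_add]
    congr 1
    have hlog : Real.log (c / (c + 3 * x)) = Real.log c - Real.log (c + 3 * x) :=
      Real.log_div (ne_of_gt hc0) (ne_of_gt hden)
    have hc_eq : c = x ^ 2 := hsq.symm
    have hlogc : Real.log c = 2 * Real.log x := by
      rw [hc_eq, sq, Real.log_mul (ne_of_gt hs0) (ne_of_gt hs0)]; ring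
    have hsum : c + 3 * x = x * (x + 3) := by rw [hc_eq]; ring
    have hlogsum : Real.log (c + 3 * x) = Real.log x + Real.log (x + 3) := by
      rw [hsum, Real.log_mul (ne_of_gt hs0) (by positivity)]
    rw [hlog, hlogc, hlogsum, gfun, hc_eq]
    ring
  intro a ha b hb hab
  simp only [Set.mem_Ici] at ha hb
  dsimp only
  rw [hrw a ha, hrw b hb, Real.exp_le_exp]
  apply gfun_antitone
  · exact Set.mem_Ici.mpr (Real.one_le_sqrt.mpr ha)
  · exact Set.mem_Ici.mpr (Real.one_le_sqrt.mpr hb)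
  · exact Real.sqrt_le_sqrt hab
end

section
/- For all real x ≥ 1, the quantity 3 − (2x+6)·ln(1 + 3x/(x²+3x)) − ((2x+6)(x²+3x) − (x²+6x)(2x+3))/(x²+3x) is at most −27/((x+3)(2x+9)), and in particular is strictly negative. -/
/-!
Put `u = 3 / (x + 3)`. The quantity simplifies to `6 - 3u - (6 / u) log (1 + u)`, and the
Padé-type bound `log (1 + u) ≥ 2u / (u + 2)` for `u ≥ 0` makes it at most
`-3u² / (u + 2) = -27 / ((x + 3)(2x + 9))`.
-/

open Real

lemma six_div_le_log_one_add_three_div {x : ℝ} (hx : -3 < x) :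
    6 / (2 * x + 9) ≤ log (1 + 3 / (x + 3)) := by
  have hx3 : x + 3 ≠ 0 := by linarith
  have hu : 0 < 3 / (x + 3) := div_pos three_pos (by linarith)
  convert le_log_one_add_of_nonneg hu.le using 1
  field_simp
  ring

lemma mu_derivative_eq {x : ℝ} (hx : x ≠ 0) (hx3 : x + 3 ≠ 0) :
    3 - (2 * x + 6) * log (1 + 3 * x / (x ^ 2 + 3 * x)) -
        ((2 * x + 6) * (x ^ 2 + 3 * x) - (x ^ 2 + 6 * x) * (2 * x + 3)) / (x ^ 2 + 3 * x)
      = 3 * (2 * x + 3) / (x + 3) - 2 * (x + 3) * log (1 + 3 / (x + 3)) := by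
  have hden : x ^ 2 + 3 * x ≠ 0 := by
    rw [show x ^ 2 + 3 * x = x * (x + 3) by ring]
    exact mul_ne_zero hx hx3
  have h : 3 * x / (x ^ 2 + 3 * x) = 3 / (x + 3) := by
    rw [div_eq_div_iff hden hx3]
    ring
  rw [h]
  field_simp
  ring

theorem mu_derivative_bound (x : ℝ) (hx : 1 ≤ x) :
    3 - (2 * x + 6) * Real.log (1 + 3 * x / (x ^ 2 + 3 * x)) -
        ((2 * x + 6) * (x ^ 2 + 3 * x) - (x ^ 2 + 6 * x) * (2 * x + 3)) / (x ^ 2 + 3 * x)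
      ≤ -27 / ((x + 3) * (2 * x + 9)) ∧
    3 - (2 * x + 6) * Real.log (1 + 3 * x / (x ^ 2 + 3 * x)) -
        ((2 * x + 6) * (x ^ 2 + 3 * x) - (x ^ 2 + 6 * x) * (2 * x + 3)) / (x ^ 2 + 3 * x)
      < 0 := by
  have hx3 : 0 < x + 3 := by linarith
  have hx9 : 0 < 2 * x + 9 := by linarith
  have hbound : 3 - (2 * x + 6) * log (1 + 3 * x / (x ^ 2 + 3 * x)) -
        ((2 * x + 6) * (x ^ 2 + 3 * x) - (x ^ 2 + 6 * x) * (2 * x + 3)) / (x ^ 2 + 3 * x)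
      ≤ -27 / ((x + 3) * (2 * x + 9)) :=
    calc _ = 3 * (2 * x + 3) / (x + 3) - 2 * (x + 3) * log (1 + 3 / (x + 3)) :=
          mu_derivative_eq (by linarith : 0 < x).ne' hx3.ne'
      _ ≤ 3 * (2 * x + 3) / (x + 3) - 2 * (x + 3) * (6 / (2 * x + 9)) := by
          gcongr
          exact six_div_le_log_one_add_three_div (by linarith)
      _ = -27 / ((x + 3) * (2 * x + 9)) := by
          field_simp
          ring
  exact ⟨hbound, hbound.trans_lt (div_neg_of_neg_of_pos (by norm_num) (by positivity))⟩
end
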